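/- Let r > 1 be an integer, and let φ be a discrete kernel and ψ a continuous kernel satisfying assumptions (i) and (ii) and both satisfying condition (Θ) with θ > r + 1. Then for every g ∈ C^r(ℝ), every w > 0 and every x ∈ ℝ one has |(D_w^{φ,ψ} g)(x) − g(x)| ≤ (‖g^{(r)}‖_∞ / (w^r · r!)) · Σ_{ν=0}^{r} binom(r,ν) M_{r−ν}(φ) M̃_ν(ψ), and the constant Σ_{ν=0}^{r} binom(r,ν) M_{r−ν}(φ) M̃_ν(ψ) is finite. -/

import Mathlib

open MeasureTheory Filter Set
open scoped ENNReal BigOperators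

/-- The Durrmeyer sampling operator based upon the kernels `φ` (discrete) and `ψ` (continuous). -/
noncomputable def durr (φ ψ : ℝ → ℝ) (w : ℝ) (f : ℝ → ℝ) (x : ℝ) : ℝ :=
  ∑' k : ℤ, φ (w * x - k) * (w * ∫ u : ℝ, ψ (w * u - k) * f u)

/-- A discrete kernel: bounded, integrable, with `∑_{k∈ℤ} φ(u-k) = 1` for all `u`. -/
structure IsDiscreteKernel (φ : ℝ → ℝ) : Prop where
  integrable : Integrable φ
  bounded : ∃ M : ℝ, ∀ x : ℝ, |φ x| ≤ M
  partition : ∀ u : ℝ, HasSum (fun k : ℤ => φ (u - k)) 1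

/-- A continuous kernel: integrable, bounded near `0`, with `∫ ψ = 1`. -/
structure IsContinuousKernel (ψ : ℝ → ℝ) : Prop where
  integrable : Integrable ψ
  boundedNearZero : ∃ δ : ℝ, 0 < δ ∧ ∃ M : ℝ, ∀ u : ℝ, |u| ≤ δ → |ψ u| ≤ M
  integral_one : (∫ u : ℝ, ψ u) = 1

/-- Discrete algebraic moment `m_ν(φ,u)`. -/
noncomputable def discMoment (φ : ℝ → ℝ) (ν : ℕ) (u : ℝ) : ℝ :=
  ∑' k : ℤ, φ (u - k) * ((k : ℝ) - u) ^ ν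

/-- Continuous algebraic moment `m̃_ν(ψ)`. -/
noncomputable def contMoment (ψ : ℝ → ℝ) (ν : ℕ) : ℝ :=
  ∫ u : ℝ, u ^ ν * ψ u

/-- Discrete absolute moment `M_ν(φ)` (of real order `ν`), valued in `ℝ≥0∞`. -/
noncomputable def discAbsMoment (φ : ℝ → ℝ) (ν : ℝ) : ℝ≥0∞ :=
  ⨆ u : ℝ, ∑' k : ℤ, ENNReal.ofReal (|φ (u - k)| * |u - (k : ℝ)| ^ ν)

/-- Continuous absolute moment `M̃_ν(ψ)` (of real order `ν`), valued in `ℝ≥0∞`. -/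
noncomputable def contAbsMoment (ψ : ℝ → ℝ) (ν : ℝ) : ℝ≥0∞ :=
  ∫⁻ u : ℝ, ENNReal.ofReal (|u| ^ ν * |ψ u|)

/-- Condition `(Θ)`: `ξ(u) = O(|u|^{-θ})` as `|u| → +∞`. -/
def CondTheta (ξ : ℝ → ℝ) (θ : ℝ) : Prop :=
  ∃ C R : ℝ, 0 < R ∧ ∀ u : ℝ, R ≤ |u| → |ξ u| ≤ C * |u| ^ (-θ)

/-- Assumption (i): the algebraic moments `m_ν(φ,u)`, `ν = 1,…,r`, do not depend on `u`. -/
def AssumptionI (φ : ℝ → ℝ) (r : ℕ) : Prop :=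
  ∀ ν : ℕ, 1 ≤ ν → ν ≤ r → ∀ u v : ℝ, discMoment φ ν u = discMoment φ ν v

/-- Assumption (ii) (Strang–Fix type / vanishing moment condition of Durrmeyer type). -/
def AssumptionII (φ ψ : ℝ → ℝ) (r : ℕ) : Prop :=
  ∀ i : ℕ, 1 ≤ i → i ≤ r - 1 →
    ∑ ν ∈ Finset.range (i + 1),
      (i.choose ν : ℝ) * discMoment φ (i - ν) 0 * contMoment ψ ν = 0

/-- The `L^p`-norm (`p ∈ [1,∞]`, as an extended nonneg real) of `f : ℝ → ℝ`. -/
noncomputable def lpN (p : ℝ≥0∞) (f : ℝ → ℝ) : ℝ≥0∞ := eLpNorm f p volume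

/-- The `r`-th modulus of smoothness `ω_r(f,δ)_p`. -/
noncomputable def modulus (r : ℕ) (p : ℝ≥0∞) (f : ℝ → ℝ) (δ : ℝ) : ℝ≥0∞ :=
  ⨆ t : {t : ℝ // |t| ≤ δ},
    lpN p (fun x => ∑ j ∈ Finset.range (r + 1),
      (-1 : ℝ) ^ (r - j) * (r.choose j : ℝ) * f (x + (j : ℝ) * (t : ℝ)))

/-- The generalized Lipschitz class `Lip*(α, L^p)`: `f ∈ L^p` with
`ω_{⌊α⌋+1}(f,δ)_p = O(δ^α)` as `δ → 0⁺`. -/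
def LipStar (α : ℝ) (p : ℝ≥0∞) (f : ℝ → ℝ) : Prop :=
  MemLp f p volume ∧
    ∃ C : ℝ, 0 < C ∧ ∃ δ₀ : ℝ, 0 < δ₀ ∧ ∀ δ : ℝ, 0 < δ → δ ≤ δ₀ →
      modulus (⌊α⌋₊ + 1) p f δ ≤ ENNReal.ofReal (C * δ ^ α)

/-- `‖D_w^{φ,ψ} f − f‖_p = O(w^{−β})` as `w → +∞`. -/
def durrBigO (φ ψ : ℝ → ℝ) (p : ℝ≥0∞) (f : ℝ → ℝ) (β : ℝ) : Prop :=
  ∃ C : ℝ, 0 < C ∧ ∃ W : ℝ, 0 < W ∧ ∀ w : ℝ, W ≤ w →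
    lpN p (fun x => durr φ ψ w f x - f x) ≤ ENNReal.ofReal (C * w ^ (-β))

/-- Membership in `C(ℝ)`: uniformly continuous and bounded. -/
def ContBdd (f : ℝ → ℝ) : Prop :=
  UniformContinuous f ∧ ∃ M : ℝ, ∀ x : ℝ, |f x| ≤ M

/-- Membership in the Sobolev space `W^{r,p}(ℝ)`. -/
def MemSobolev (r : ℕ) (p : ℝ≥0∞) (f : ℝ → ℝ) : Prop :=
  MemLp f p volume ∧ (∀ i < r, Differentiable ℝ (iteratedDeriv i f)) ∧
    MemLp (iteratedDeriv r f) p volume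

/-- Membership in `C^r(ℝ)`: `r`-fold differentiable with `f, f', …, f^{(r)}` in `C(ℝ)`. -/
def MemCr (r : ℕ) (f : ℝ → ℝ) : Prop :=
  (∀ i < r, Differentiable ℝ (iteratedDeriv i f)) ∧
    ∀ i ≤ r, ContBdd (iteratedDeriv i f)

/-!
Expand `g` by Taylor's formula of order `r` at `x`. After the substitution `t = w u - k`, the
Taylor polynomial contributes `∑ᵢ g⁽ⁱ⁾(x) / (i! wⁱ) ∑_ν C(i,ν) m_{i-ν}(φ, wx) m̃_ν(ψ)`; by (i) the
discrete moments do not depend on `wx`, so by (ii) every term with `i ≥ 1` vanishes and the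
polynomial part reproduces `g x`. The Lagrange remainder is at most
`‖g⁽ʳ⁾‖_∞ |t + k - wx|ʳ / (wʳ r!)`; expanding `(|t| + |k - wx|)ʳ` binomially and summing over `k`
gives the absolute moments, which condition (Θ) with `θ > r + 1` makes finite.
-/

lemma rpow_neg_le_two_rpow_mul_rpow_neg {a b θ : ℝ} (hθ : 0 ≤ θ) (ha : 0 < a) (hab : a ≤ 2 * b) :
    b ^ (-θ) ≤ 2 ^ θ * a ^ (-θ) :=
  calc b ^ (-θ) ≤ (a / 2) ^ (-θ) :=
        Real.rpow_le_rpow_of_nonpos (by positivity) (by linarith) (by linarith)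
    _ = 2 ^ θ * a ^ (-θ) := by
        rw [Real.div_rpow ha.le zero_le_two, Real.rpow_neg zero_le_two, div_inv_eq_mul, mul_comm]

lemma CondTheta.exists_abs_le_one_add_abs_rpow {ξ : ℝ → ℝ} {θ : ℝ} (h : CondTheta ξ θ)
    (hθ : 0 ≤ θ) : ∃ C R : ℝ, 0 ≤ C ∧ ∀ t, R ≤ |t| → |ξ t| ≤ C * (1 + |t|) ^ (-θ) := by
  obtain ⟨C, R, -, hC⟩ := h
  refine ⟨|C| * 2 ^ θ, max R 1, by positivity, fun t ht => ?_⟩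
  have ht1 : 1 ≤ |t| := le_of_max_le_right ht
  calc |ξ t| ≤ C * |t| ^ (-θ) := hC t (le_of_max_le_left ht)
    _ ≤ |C| * (2 ^ θ * (1 + |t|) ^ (-θ)) := by
        gcongr
        · exact le_abs_self C
        · exact rpow_neg_le_two_rpow_mul_rpow_neg hθ (by positivity) (by linarith)
    _ = |C| * 2 ^ θ * (1 + |t|) ^ (-θ) := by ring

lemma CondTheta.exists_abs_le_one_add_abs_rpow_of_bounded {φ : ℝ → ℝ} {θ : ℝ}
    (h : CondTheta φ θ) (hθ : 0 ≤ θ) (hb : ∃ M, ∀ x, |φ x| ≤ M) :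
    ∃ K : ℝ, ∀ t, |φ t| ≤ K * (1 + |t|) ^ (-θ) := by
  obtain ⟨M, hM⟩ := hb
  obtain ⟨C, R, -, hC⟩ := h.exists_abs_le_one_add_abs_rpow hθ
  have hM0 : 0 ≤ M := (abs_nonneg _).trans (hM 0)
  refine ⟨max (M * (1 + |R|) ^ θ) C, fun t => ?_⟩
  rcases le_or_gt R |t| with ht | ht
  · exact (hC t ht).trans (by gcongr; exact le_max_right _ _)
  calc |φ t| ≤ M := hM t
    _ = M * (1 + |R|) ^ θ * (1 + |R|) ^ (-θ) := by
        rw [mul_assoc, ← Real.rpow_add (by positivity), add_neg_cancel, Real.rpow_zero, mul_one]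
    _ ≤ M * (1 + |R|) ^ θ * (1 + |t|) ^ (-θ) :=
        mul_le_mul_of_nonneg_left (Real.rpow_le_rpow_of_nonpos (by positivity)
          (by linarith [le_abs_self R]) (by linarith)) (by positivity)
    _ ≤ max (M * (1 + |R|) ^ θ) C * (1 + |t|) ^ (-θ) := by gcongr; exact le_max_left _ _

lemma summable_one_add_abs_int_rpow_neg {s : ℝ} (hs : 1 < s) :
    Summable fun n : ℤ => (1 + |(n : ℝ)|) ^ (-s) := by
  refine (Real.summable_abs_int_rpow hs).of_norm_bounded_eventually ?_
  filter_upwards [eventually_cofinite_ne 0] with n hn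
  rw [Real.norm_of_nonneg (by positivity)]
  exact Real.rpow_le_rpow_of_nonpos (by positivity) (by linarith) (by linarith)

lemma exists_forall_tsum_abs_int_sub_le {f : ℝ → ℝ} {C s : ℝ} (hs : 1 < s)
    (hf : ∀ t, |f t| ≤ C * (1 + |t|) ^ (-s)) :
    ∃ B, ∀ u, Summable (fun k : ℤ => |f (u - k)|) ∧ ∑' k : ℤ, |f (u - k)| ≤ B := by
  set S := ∑' n : ℤ, (1 + |(n : ℝ)|) ^ (-s)
  refine ⟨C * 2 ^ s * S, fun u => ?_⟩
  set bound : ℤ → ℝ := fun k => C * 2 ^ s * (1 + |((k - ⌊u⌋ : ℤ) : ℝ)|) ^ (-s)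
  -- `u - k` lies within distance `1` of `⌊u⌋ - k`, which makes the bound uniform in `u`
  have hle : ∀ k : ℤ, |f (u - k)| ≤ bound k := fun k => by
    have hfl : |u - ⌊u⌋| ≤ 1 := by
      rw [abs_of_nonneg (by linarith [Int.floor_le u])]; linarith [Int.lt_floor_add_one u]
    have hdist : 1 + |((k - ⌊u⌋ : ℤ) : ℝ)| ≤ 2 * (1 + |u - k|) := by
      push_cast
      linarith [abs_sub_le (k : ℝ) u ⌊u⌋, abs_sub_comm (k : ℝ) u, abs_nonneg (u - k)]
    have hC : 0 ≤ C := nonneg_of_mul_nonneg_left ((abs_nonneg _).trans (hf 0)) (by positivity)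
    calc |f (u - k)| ≤ C * (1 + |u - k|) ^ (-s) := hf _
      _ ≤ C * (2 ^ s * (1 + |((k - ⌊u⌋ : ℤ) : ℝ)|) ^ (-s)) := by
          gcongr
          exact rpow_neg_le_two_rpow_mul_rpow_neg (by linarith) (by positivity) hdist
      _ = bound k := by ring
  have hshift := (Equiv.subRight ⌊u⌋).summable_iff.mpr (summable_one_add_abs_int_rpow_neg hs)
  have hbound : Summable bound := hshift.mul_left _
  have hsum : Summable (fun k : ℤ => |f (u - k)|) :=
    hbound.of_nonneg_of_le (fun _ => abs_nonneg _) hle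
  refine ⟨hsum, (hsum.tsum_le_tsum hle hbound).trans_eq ?_⟩
  rw [tsum_mul_left]
  congr 1
  exact (Equiv.subRight ⌊u⌋).tsum_eq fun n : ℤ => (1 + |(n : ℝ)|) ^ (-s)

lemma CondTheta.exists_forall_tsum_abs_mul_abs_sub_rpow_le {φ : ℝ → ℝ} {θ p : ℝ}
    (h : CondTheta φ θ) (hb : ∃ M, ∀ x, |φ x| ≤ M) (hp : 0 ≤ p) (hpθ : p + 1 < θ) :
    ∃ B, ∀ u, Summable (fun k : ℤ => |φ (u - k)| * |u - k| ^ p) ∧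
      ∑' k : ℤ, |φ (u - k)| * |u - k| ^ p ≤ B := by
  obtain ⟨K, hK⟩ := h.exists_abs_le_one_add_abs_rpow_of_bounded (by linarith) hb
  have hf : ∀ t, |(|φ t| * |t| ^ p)| ≤ K * (1 + |t|) ^ (-(θ - p)) := fun t => by
    rw [abs_of_nonneg (by positivity), neg_sub, sub_eq_neg_add,
      Real.rpow_add (by positivity), ← mul_assoc]
    exact mul_le_mul (hK t) (Real.rpow_le_rpow (abs_nonneg t) (by linarith) hp)
      (by positivity) ((abs_nonneg _).trans (hK t))
  obtain ⟨B, hB⟩ := exists_forall_tsum_abs_int_sub_le (by linarith) hf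
  have habs : ∀ v, |(|φ v| * |v| ^ p)| = |φ v| * |v| ^ p := fun v => abs_of_nonneg (by positivity)
  exact ⟨B, fun u => by simpa only [habs] using hB u⟩

lemma CondTheta.discAbsMoment_lt_top {φ : ℝ → ℝ} {θ p : ℝ}
    (h : CondTheta φ θ) (hb : ∃ M, ∀ x, |φ x| ≤ M) (hp : 0 ≤ p) (hpθ : p + 1 < θ) :
    discAbsMoment φ p < ⊤ := by
  obtain ⟨B, hB⟩ := h.exists_forall_tsum_abs_mul_abs_sub_rpow_le hb hp hpθ
  refine lt_of_le_of_lt (iSup_le fun u => ?_) (ENNReal.ofReal_lt_top (r := B))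
  rw [← ENNReal.ofReal_tsum_of_nonneg (fun _ => by positivity) (hB u).1]
  exact ENNReal.ofReal_le_ofReal (hB u).2

lemma CondTheta.summable_mul_sub_pow {φ : ℝ → ℝ} {θ : ℝ}
    (h : CondTheta φ θ) (hb : ∃ M, ∀ x, |φ x| ≤ M) {j : ℕ} (hj : (j : ℝ) + 1 < θ) (u : ℝ) :
    Summable (fun k : ℤ => φ (u - k) * ((k : ℝ) - u) ^ j) := by
  obtain ⟨B, hB⟩ := h.exists_forall_tsum_abs_mul_abs_sub_rpow_le hb (Nat.cast_nonneg j) hj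
  refine Summable.of_abs ((hB u).1.congr fun k => ?_)
  rw [Real.rpow_natCast, abs_mul, abs_pow, abs_sub_comm]

lemma CondTheta.integrable_abs_rpow_mul_abs {ψ : ℝ → ℝ} {θ p : ℝ}
    (h : CondTheta ψ θ) (hψ : Integrable ψ) (hp : 0 ≤ p) (hpθ : p + 1 < θ) :
    Integrable (fun t => |t| ^ p * |ψ t|) := by
  obtain ⟨C, R, hC0, hC⟩ := h.exists_abs_le_one_add_abs_rpow (by linarith)
  have htail : Integrable (fun t : ℝ => (1 + ‖t‖) ^ (-(θ - p))) :=
    integrable_one_add_norm (by simp only [Module.finrank_self, Nat.cast_one]; linarith)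
  refine Integrable.mono' ((hψ.norm.const_mul (|R| ^ p)).add (htail.const_mul C))
    (((continuous_abs.rpow_const fun _ => Or.inr hp).aestronglyMeasurable).mul
      hψ.aestronglyMeasurable.norm) (ae_of_all _ fun t => ?_)
  simp only [Real.norm_eq_abs, Pi.add_apply, abs_of_nonneg (by positivity : 0 ≤ |t| ^ p * |ψ t|)]
  have hψt : 0 ≤ |R| ^ p * |ψ t| := by positivity
  have htailt : 0 ≤ C * (1 + |t|) ^ (-(θ - p)) := by positivity
  rcases le_or_gt R |t| with ht | ht
  · calc |t| ^ p * |ψ t| ≤ (1 + |t|) ^ p * (C * (1 + |t|) ^ (-θ)) :=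
          mul_le_mul (Real.rpow_le_rpow (abs_nonneg t) (by linarith) hp) (hC t ht)
            (abs_nonneg _) (by positivity)
      _ = C * (1 + |t|) ^ (-(θ - p)) := by
          rw [neg_sub, sub_eq_add_neg, Real.rpow_add (by positivity)]; ring
      _ ≤ _ := by linarith
  · calc |t| ^ p * |ψ t| ≤ |R| ^ p * |ψ t| := mul_le_mul_of_nonneg_right
          (Real.rpow_le_rpow (abs_nonneg t) (ht.le.trans (le_abs_self R)) hp) (abs_nonneg _)
      _ ≤ _ := by linarith

lemma CondTheta.contAbsMoment_lt_top {ψ : ℝ → ℝ} {θ p : ℝ}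
    (h : CondTheta ψ θ) (hψ : Integrable ψ) (hp : 0 ≤ p) (hpθ : p + 1 < θ) :
    contAbsMoment ψ p < ⊤ :=
  (h.integrable_abs_rpow_mul_abs hψ hp hpθ).lintegral_lt_top

lemma CondTheta.integrable_pow_mul {ψ : ℝ → ℝ} {θ : ℝ}
    (h : CondTheta ψ θ) (hψ : Integrable ψ) {j : ℕ} (hj : (j : ℝ) + 1 < θ) :
    Integrable (fun t => t ^ j * ψ t) := by
  refine (h.integrable_abs_rpow_mul_abs hψ (Nat.cast_nonneg j) hj).mono'
    ((continuous_pow j).aestronglyMeasurable.mul hψ.aestronglyMeasurable) (ae_of_all _ fun t => ?_)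
  rw [Real.rpow_natCast, Real.norm_eq_abs, abs_mul, abs_pow]

lemma enorm_sub_taylor_le {f : ℝ → ℝ} {r : ℕ} (hf : ContDiff ℝ r f) {L : ℝ≥0∞}
    (hL : ∀ y, ‖iteratedDeriv r f y‖ₑ ≤ L) (x₀ x : ℝ) :
    ‖f x - ∑ i ∈ Finset.range r, iteratedDeriv i f x₀ / i.factorial * (x - x₀) ^ i‖ₑ ≤
      L * ENNReal.ofReal (|x - x₀| ^ r / r.factorial) := by
  rcases r with _ | n
  · simpa using hL x
  rcases eq_or_ne x₀ x with rfl | hne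
  · simp [Finset.sum_range_succ']
  obtain ⟨x', -, hx'⟩ := taylor_mean_remainder_lagrange_iteratedDeriv hne hf.contDiffOn
  have htaylor : taylorWithinEval f n (uIcc x₀ x) x₀ x =
      ∑ i ∈ Finset.range (n + 1), iteratedDeriv i f x₀ / i.factorial * (x - x₀) ^ i := by
    rw [taylor_within_apply]
    refine Finset.sum_congr rfl fun i hi => ?_
    rw [iteratedDerivWithin_eq_iteratedDeriv (uniqueDiffOn_uIcc hne)
      (hf.contDiffAt.of_le (by exact_mod_cast (Finset.mem_range.1 hi).le)) left_mem_uIcc,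
      smul_eq_mul]
    ring
  rw [← htaylor, hx', mul_div_assoc, enorm_mul, Real.enorm_eq_ofReal_abs (_ / _), abs_div,
    abs_pow, Nat.abs_cast]
  gcongr
  exact hL x'

lemma Continuous.enorm_le_eLpNorm_top {X E : Type*} [TopologicalSpace X] [MeasurableSpace X]
    [OpensMeasurableSpace X] {μ : Measure X} [μ.IsOpenPosMeasure] [NormedAddCommGroup E]
    {f : X → E} (hf : Continuous f) (x : X) : ‖f x‖ₑ ≤ eLpNorm f ⊤ μ := by
  rw [eLpNorm_exponent_top, eLpNormEssSup, ← iSup_eq_essSup fun y a ha => ?_]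
  · exact le_iSup (fun y => ‖f y‖ₑ) x
  · exact (isOpen_lt continuous_const hf.enorm).measure_ne_zero μ ⟨y, ha⟩

lemma MemCr.contDiff {r : ℕ} {f : ℝ → ℝ} (hf : MemCr r f) : ContDiff ℝ r f :=
  contDiff_iff_iteratedDeriv.2 ⟨fun m hm => (hf.2 m (by exact_mod_cast hm)).1.continuous,
    fun m hm => hf.1 m (by exact_mod_cast hm)⟩

lemma IsDiscreteKernel.discMoment_zero {φ : ℝ → ℝ} (hφ : IsDiscreteKernel φ) (u : ℝ) :
    discMoment φ 0 u = 1 := by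
  simpa [discMoment] using (hφ.partition u).tsum_eq

lemma IsContinuousKernel.contMoment_zero {ψ : ℝ → ℝ} (hψ : IsContinuousKernel ψ) :
    contMoment ψ 0 = 1 := by
  simpa [contMoment] using hψ.integral_one

lemma AssumptionI.discMoment_eq {φ : ℝ → ℝ} {r : ℕ} (hi : AssumptionI φ r)
    (hφ : IsDiscreteKernel φ) {j : ℕ} (hj : j ≤ r) (u v : ℝ) :
    discMoment φ j u = discMoment φ j v := by
  rcases Nat.eq_zero_or_pos j with rfl | hj0
  · rw [hφ.discMoment_zero, hφ.discMoment_zero]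
  · exact hi j hj0 hj u v

lemma sum_choose_mul_discMoment_mul_contMoment {φ ψ : ℝ → ℝ} {r : ℕ}
    (hφ : IsDiscreteKernel φ) (hψ : IsContinuousKernel ψ)
    (hi : AssumptionI φ r) (hii : AssumptionII φ ψ r) {i : ℕ} (hir : i < r) (u : ℝ) :
    ∑ ν ∈ Finset.range (i + 1), (i.choose ν : ℝ) * discMoment φ (i - ν) u * contMoment ψ ν =
      0 ^ i := by
  rw [Finset.sum_congr rfl fun ν _ => by rw [hi.discMoment_eq hφ (by omega : i - ν ≤ r) u 0]]
  rcases Nat.eq_zero_or_pos i with rfl | hi0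
  · simp [hφ.discMoment_zero, hψ.contMoment_zero]
  · rw [hii i hi0 (by omega), zero_pow hi0.ne']

lemma mul_integral_comp_mul_sub {w : ℝ} (hw : 0 < w) (ψ f : ℝ → ℝ) (a : ℝ) :
    w * ∫ u, ψ (w * u - a) * f u = ∫ t, ψ t * f ((t + a) / w) := by
  set F : ℝ → ℝ := fun t => ψ t * f ((t + a) / w)
  have hF : ∀ u, ψ (w * u - a) * f u = F (w * u - a) := fun u => by
    simp only [F, sub_add_cancel, mul_div_cancel_left₀ _ hw.ne']
  simp_rw [hF]
  rw [Measure.integral_comp_mul_left (fun y => F (y - a)) w, integral_sub_right_eq_self,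
    abs_of_pos (inv_pos.2 hw), smul_eq_mul, ← mul_assoc, mul_inv_cancel₀ hw.ne', one_mul]

lemma durr_eq_tsum_integral {w : ℝ} (hw : 0 < w) (φ ψ f : ℝ → ℝ) (x : ℝ) :
    durr φ ψ w f x = ∑' k : ℤ, φ (w * x - k) * ∫ t, ψ t * f ((t + k) / w) :=
  tsum_congr fun k => by rw [mul_integral_comp_mul_sub hw]

lemma mul_add_pow_eq_sum (y t a : ℝ) (i : ℕ) :
    y * (t + a) ^ i =
      ∑ ν ∈ Finset.range (i + 1), (i.choose ν : ℝ) * a ^ (i - ν) * (t ^ ν * y) := by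
  rw [add_pow, Finset.mul_sum]
  exact Finset.sum_congr rfl fun ν _ => by ring

lemma integrable_mul_add_pow {ψ : ℝ → ℝ} {i : ℕ}
    (hψ : ∀ ν ≤ i, Integrable (fun t => t ^ ν * ψ t)) (a : ℝ) :
    Integrable (fun t => ψ t * (t + a) ^ i) := by
  simp_rw [mul_add_pow_eq_sum]
  exact integrable_finsetSum _ fun ν hν =>
    (hψ ν (Nat.lt_succ_iff.1 (Finset.mem_range.1 hν))).const_mul _

lemma integral_mul_add_pow {ψ : ℝ → ℝ} {i : ℕ}
    (hψ : ∀ ν ≤ i, Integrable (fun t => t ^ ν * ψ t)) (a : ℝ) :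
    ∫ t, ψ t * (t + a) ^ i =
      ∑ ν ∈ Finset.range (i + 1), (i.choose ν : ℝ) * a ^ (i - ν) * contMoment ψ ν := by
  simp_rw [mul_add_pow_eq_sum]
  rw [integral_finsetSum _ fun ν hν =>
    (hψ ν (Nat.lt_succ_iff.1 (Finset.mem_range.1 hν))).const_mul _]
  simp_rw [integral_const_mul, contMoment]

lemma hasSum_mul_integral_mul_add_pow {φ ψ : ℝ → ℝ} {i : ℕ} {u : ℝ}
    (hφ : ∀ j ≤ i, Summable (fun k : ℤ => φ (u - k) * ((k : ℝ) - u) ^ j))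
    (hψ : ∀ ν ≤ i, Integrable (fun t => t ^ ν * ψ t)) :
    HasSum (fun k : ℤ => φ (u - k) * ∫ t, ψ t * (t + (k - u)) ^ i)
      (∑ ν ∈ Finset.range (i + 1),
        (i.choose ν : ℝ) * discMoment φ (i - ν) u * contMoment ψ ν) := by
  simp_rw [integral_mul_add_pow hψ, Finset.mul_sum]
  refine hasSum_sum fun ν _ => ?_
  rw [mul_right_comm]
  exact ((hφ (i - ν) (Nat.sub_le i ν)).hasSum.mul_left _).congr_fun fun k => by ring

lemma integrable_mul_sum_mul_add_pow {ψ : ℝ → ℝ} {r : ℕ}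
    (hψ : ∀ ν < r, Integrable (fun t => t ^ ν * ψ t)) (d : ℕ → ℝ) (a : ℝ) :
    Integrable (fun t => ψ t * ∑ i ∈ Finset.range r, d i * (t + a) ^ i) := by
  simp_rw [Finset.mul_sum, mul_left_comm (ψ _)]
  exact integrable_finsetSum _ fun i hi =>
    (integrable_mul_add_pow (fun ν hν => hψ ν (by simp at hi; omega)) a).const_mul _

lemma hasSum_mul_integral_mul_sum_mul_add_pow {φ ψ : ℝ → ℝ} {r : ℕ}
    (hφ : IsDiscreteKernel φ) (hψ : IsContinuousKernel ψ)
    (hi : AssumptionI φ r) (hii : AssumptionII φ ψ r) (hr : 0 < r) {u : ℝ}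
    (hφs : ∀ j < r, Summable (fun k : ℤ => φ (u - k) * ((k : ℝ) - u) ^ j))
    (hψi : ∀ ν < r, Integrable (fun t => t ^ ν * ψ t)) (d : ℕ → ℝ) :
    HasSum (fun k : ℤ => φ (u - k) * ∫ t, ψ t * ∑ i ∈ Finset.range r, d i * (t + (k - u)) ^ i)
      (d 0) := by
  have hint : ∀ a : ℝ, ∀ i ∈ Finset.range r, Integrable (fun t => d i * (ψ t * (t + a) ^ i)) :=
    fun a i hi => (integrable_mul_add_pow (fun ν hν => hψi ν (by simp at hi; omega)) a).const_mul _
  simp_rw [Finset.mul_sum, mul_left_comm (ψ _)]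
  simp_rw [integral_finsetSum _ (hint _), integral_const_mul, Finset.mul_sum]
  have hval : ∑ i ∈ Finset.range r, d i *
      ∑ ν ∈ Finset.range (i + 1), (i.choose ν : ℝ) * discMoment φ (i - ν) u * contMoment ψ ν =
      d 0 := by
    rw [Finset.sum_congr rfl fun i hir => congrArg (d i * ·)
      (sum_choose_mul_discMoment_mul_contMoment hφ hψ hi hii (Finset.mem_range.1 hir) u)]
    obtain ⟨n, rfl⟩ : ∃ n, r = n + 1 := ⟨r - 1, by omega⟩
    simp [Finset.sum_range_succ']
  have hterm : ∀ i ∈ Finset.range r,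
      HasSum (fun k : ℤ => d i * (φ (u - k) * ∫ t, ψ t * (t + (k - u)) ^ i)) (d i *
        ∑ ν ∈ Finset.range (i + 1), (i.choose ν : ℝ) * discMoment φ (i - ν) u * contMoment ψ ν) :=
    fun i hi => (hasSum_mul_integral_mul_add_pow (fun j hj => hφs j (by simp at hi; omega))
      (fun ν hν => hψi ν (by simp at hi; omega))).mul_left (d i)
  rw [← hval]
  exact (hasSum_sum hterm).congr_fun fun k => Finset.sum_congr rfl fun i _ => by ring

lemma durr_sub_eq_tsum_mul_integral_sub_taylor {φ ψ g : ℝ → ℝ} {r : ℕ}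
    (hφ : IsDiscreteKernel φ) (hψ : IsContinuousKernel ψ)
    (hi : AssumptionI φ r) (hii : AssumptionII φ ψ r) (hr : 0 < r)
    (hφs : ∀ j < r, ∀ u, Summable (fun k : ℤ => φ (u - k) * ((k : ℝ) - u) ^ j))
    (hψi : ∀ ν < r, Integrable (fun t => t ^ ν * ψ t)) (hg : MemCr r g) {w : ℝ} (hw : 0 < w)
    (x : ℝ) :
    durr φ ψ w g x - g x = ∑' k : ℤ, φ (w * x - k) * ∫ t, ψ t * (g ((t + k) / w) -
      ∑ i ∈ Finset.range r, iteratedDeriv i g x / i.factorial * ((t + k) / w - x) ^ i) := by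
  set d : ℕ → ℝ := fun i => iteratedDeriv i g x / i.factorial / w ^ i
  have hP : ∀ (k : ℤ) (t : ℝ),
      ∑ i ∈ Finset.range r, iteratedDeriv i g x / i.factorial * ((t + k) / w - x) ^ i =
        ∑ i ∈ Finset.range r, d i * (t + (k - w * x)) ^ i := fun k t =>
    Finset.sum_congr rfl fun i _ => by
      rw [show (t + k) / w - x = (t + (k - w * x)) / w by field_simp; ring, div_pow]
      simp only [d]; ring
  simp_rw [hP]
  obtain ⟨Mg, hMg⟩ := (hg.2 0 (Nat.zero_le r)).2
  have hgc : Continuous g := by simpa using (hg.2 0 (Nat.zero_le r)).1.continuous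
  have hgint : ∀ a : ℝ, Integrable (fun t => ψ t * g ((t + a) / w)) := fun a =>
    hψ.integrable.mul_bdd (by fun_prop : Continuous fun t => g ((t + a) / w)).aestronglyMeasurable
      (ae_of_all _ fun t => by simpa using hMg ((t + a) / w))
  have hφ0 : Summable (fun k : ℤ => |φ (w * x - k)|) := by simpa using (hφs 0 hr (w * x)).abs
  have hsum : Summable (fun k : ℤ => φ (w * x - k) * ∫ t, ψ t * g ((t + k) / w)) := by
    refine hφ0.mul_right (∫ t, ‖ψ t‖ * Mg) |>.of_norm_bounded fun k => ?_
    rw [norm_mul, Real.norm_eq_abs]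
    refine mul_le_mul_of_nonneg_left (norm_integral_le_of_norm_le
      (hψ.integrable.norm.mul_const Mg) (ae_of_all _ fun t => ?_)) (abs_nonneg _)
    rw [norm_mul]
    exact mul_le_mul_of_nonneg_left (by simpa using hMg _) (norm_nonneg _)
  have hpoly := hasSum_mul_integral_mul_sum_mul_add_pow hφ hψ hi hii hr
    (fun j hj => hφs j hj (w * x)) hψi d
  rw [show d 0 = g x by simp [d]] at hpoly
  rw [durr_eq_tsum_integral hw, ← (hsum.hasSum.sub hpoly).tsum_eq]
  refine tsum_congr fun k => ?_
  rw [← mul_sub, ← integral_sub (hgint k) (integrable_mul_sum_mul_add_pow hψi d _)]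
  simp_rw [mul_sub]

lemma lintegral_abs_add_pow_mul_abs_le {ψ : ℝ → ℝ} (hψ : AEMeasurable ψ) (r : ℕ) (a : ℝ) :
    ∫⁻ t, ENNReal.ofReal (|t + a| ^ r * |ψ t|) ≤
      ∑ ν ∈ Finset.range (r + 1),
        (r.choose ν : ℝ≥0∞) * ENNReal.ofReal (|a| ^ (r - ν)) * contAbsMoment ψ ν := by
  have hpt : ∀ t, ENNReal.ofReal (|t + a| ^ r * |ψ t|) ≤ ∑ ν ∈ Finset.range (r + 1),
      (r.choose ν : ℝ≥0∞) * ENNReal.ofReal (|a| ^ (r - ν)) *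
        ENNReal.ofReal (|t| ^ (ν : ℝ) * |ψ t|) := fun t => by
    have hreal : |t + a| ^ r * |ψ t| ≤ ∑ ν ∈ Finset.range (r + 1),
        (r.choose ν : ℝ) * |a| ^ (r - ν) * (|t| ^ ν * |ψ t|) := by
      rw [← mul_add_pow_eq_sum, mul_comm]
      gcongr
      exact abs_add_le t a
    refine (ENNReal.ofReal_le_ofReal hreal).trans_eq ?_
    rw [ENNReal.ofReal_sum_of_nonneg fun _ _ => by positivity]
    refine Finset.sum_congr rfl fun ν _ => ?_
    rw [ENNReal.ofReal_mul (by positivity), ENNReal.ofReal_mul (by positivity),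
      ENNReal.ofReal_natCast, Real.rpow_natCast]
  refine (lintegral_mono hpt).trans_eq ?_
  rw [lintegral_finsetSum' _ fun ν _ => by fun_prop]
  exact Finset.sum_congr rfl fun ν _ => lintegral_const_mul' _ _ (by finiteness)

lemma enorm_integral_mul_sub_taylor_le {ψ g : ℝ → ℝ} {r : ℕ} (hψ : AEMeasurable ψ)
    (hg : ContDiff ℝ r g) {L : ℝ≥0∞} (hL : ∀ y, ‖iteratedDeriv r g y‖ₑ ≤ L) {w : ℝ} (hw : 0 < w)
    (x a : ℝ) :
    ‖∫ t, ψ t * (g ((t + a) / w) -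
        ∑ i ∈ Finset.range r, iteratedDeriv i g x / i.factorial * ((t + a) / w - x) ^ i)‖ₑ ≤
      L / ENNReal.ofReal (w ^ r * r.factorial) * ∑ ν ∈ Finset.range (r + 1),
        (r.choose ν : ℝ≥0∞) * ENNReal.ofReal (|a - w * x| ^ (r - ν)) * contAbsMoment ψ ν := by
  have hpt : ∀ t, ‖ψ t * (g ((t + a) / w) -
      ∑ i ∈ Finset.range r, iteratedDeriv i g x / i.factorial * ((t + a) / w - x) ^ i)‖ₑ ≤
      L / ENNReal.ofReal (w ^ r * r.factorial) * ENNReal.ofReal (|t + (a - w * x)| ^ r * |ψ t|) :=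
    fun t => by
    have hscale : |(t + a) / w - x| ^ r / r.factorial =
        |t + (a - w * x)| ^ r / (w ^ r * r.factorial) := by
      rw [show (t + a) / w - x = (t + (a - w * x)) / w by field_simp; ring, abs_div,
        abs_of_pos hw, div_pow, div_div]
    rw [enorm_mul, mul_comm]
    refine (mul_le_mul_left (enorm_sub_taylor_le hg hL x _) _).trans_eq ?_
    rw [hscale, ENNReal.ofReal_div_of_pos (by positivity),
      ENNReal.ofReal_mul (by positivity : (0 : ℝ) ≤ |t + (a - w * x)| ^ r),
      Real.enorm_eq_ofReal_abs, div_eq_mul_inv, div_eq_mul_inv]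
    ring
  calc _ ≤ _ := enorm_integral_le_lintegral_enorm _
    _ ≤ _ := lintegral_mono hpt
    _ = _ := lintegral_const_mul'' _ (by fun_prop)
    _ ≤ _ := by gcongr; exact lintegral_abs_add_pow_mul_abs_le hψ r _

lemma tsum_ofReal_le_discAbsMoment (φ : ℝ → ℝ) (j : ℕ) (u : ℝ) :
    ∑' k : ℤ, ENNReal.ofReal (|φ (u - k)| * |u - k| ^ j) ≤ discAbsMoment φ j := by
  simp_rw [discAbsMoment, Real.rpow_natCast]
  exact le_iSup (fun v : ℝ => ∑' k : ℤ, ENNReal.ofReal (|φ (v - k)| * |v - k| ^ j)) u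

lemma enorm_durr_sub_le {φ ψ g : ℝ → ℝ} {r : ℕ}
    (hφ : IsDiscreteKernel φ) (hψ : IsContinuousKernel ψ)
    (hi : AssumptionI φ r) (hii : AssumptionII φ ψ r) (hr : 0 < r)
    (hφs : ∀ j < r, ∀ u, Summable (fun k : ℤ => φ (u - k) * ((k : ℝ) - u) ^ j))
    (hψi : ∀ ν < r, Integrable (fun t => t ^ ν * ψ t)) (hg : MemCr r g) {L : ℝ≥0∞}
    (hL : ∀ y, ‖iteratedDeriv r g y‖ₑ ≤ L) {w : ℝ} (hw : 0 < w) (x : ℝ) :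
    ‖durr φ ψ w g x - g x‖ₑ ≤ L / ENNReal.ofReal (w ^ r * r.factorial) *
      ∑ ν ∈ Finset.range (r + 1),
        (r.choose ν : ℝ≥0∞) * discAbsMoment φ ((r - ν : ℕ) : ℝ) * contAbsMoment ψ ν := by
  set c := L / ENNReal.ofReal (w ^ r * r.factorial)
  have hk : ∀ k : ℤ, ‖φ (w * x - k) * ∫ t, ψ t * (g ((t + k) / w) -
      ∑ i ∈ Finset.range r, iteratedDeriv i g x / i.factorial * ((t + k) / w - x) ^ i)‖ₑ ≤
      c * ∑ ν ∈ Finset.range (r + 1), (r.choose ν : ℝ≥0∞) *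
        ENNReal.ofReal (|φ (w * x - k)| * |w * x - k| ^ (r - ν)) * contAbsMoment ψ ν := fun k => by
    rw [enorm_mul]
    refine (mul_le_mul_right (enorm_integral_mul_sub_taylor_le hψ.integrable.aemeasurable
      hg.contDiff hL hw x k) _).trans_eq ?_
    rw [Real.enorm_eq_ofReal_abs, mul_left_comm, Finset.mul_sum]
    refine congrArg (c * ·) (Finset.sum_congr rfl fun ν _ => ?_)
    rw [ENNReal.ofReal_mul (abs_nonneg _), abs_sub_comm]
    ring
  rw [durr_sub_eq_tsum_mul_integral_sub_taylor hφ hψ hi hii hr hφs hψi hg hw]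
  calc _ ≤ _ := enorm_tsum_le_tsum_enorm
    _ ≤ _ := ENNReal.tsum_le_tsum hk
    _ = c * ∑ ν ∈ Finset.range (r + 1), (r.choose ν : ℝ≥0∞) *
          (∑' k : ℤ, ENNReal.ofReal (|φ (w * x - k)| * |w * x - k| ^ (r - ν))) *
            contAbsMoment ψ ν := by
        rw [ENNReal.tsum_mul_left, Summable.tsum_finsetSum fun _ _ => ENNReal.summable]
        simp_rw [ENNReal.tsum_mul_right, ENNReal.tsum_mul_left]
    _ ≤ _ := by
        gcongr with ν
        exact tsum_ofReal_le_discAbsMoment φ (r - ν) (w * x)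

/-- Pointwise estimate for `g ∈ C^r(ℝ)`:
`|(D_w^{φ,ψ} g)(x) − g(x)| ≤ (‖g^{(r)}‖_∞/(w^r r!)) Σ_{ν=0}^{r} C(r,ν) M_{r−ν}(φ) M̃_ν(ψ)`,
and the constant is finite. -/
theorem durr_pointwise_estimate_Cr (r : ℕ) (hr : 1 < r) (φ ψ : ℝ → ℝ)
    (hφ : IsDiscreteKernel φ) (hψ : IsContinuousKernel ψ)
    (hi : AssumptionI φ r) (hii : AssumptionII φ ψ r)
    (θφ θψ : ℝ) (hθφ : (r : ℝ) + 1 < θφ) (hθψ : (r : ℝ) + 1 < θψ)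
    (hφθ : CondTheta φ θφ) (hψθ : CondTheta ψ θψ) :
    (∑ ν ∈ Finset.range (r + 1),
        (r.choose ν : ℝ≥0∞) * discAbsMoment φ ((r - ν : ℕ) : ℝ) * contAbsMoment ψ (ν : ℝ)) < ⊤ ∧
    ∀ g : ℝ → ℝ, MemCr r g → ∀ w : ℝ, 0 < w → ∀ x : ℝ,
      ENNReal.ofReal |durr φ ψ w g x - g x| ≤
        lpN ⊤ (iteratedDeriv r g) / ENNReal.ofReal (w ^ r * (Nat.factorial r : ℝ)) *
          ∑ ν ∈ Finset.range (r + 1),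
            (r.choose ν : ℝ≥0∞) * discAbsMoment φ ((r - ν : ℕ) : ℝ) * contAbsMoment ψ (ν : ℝ) := by
  have hcast : ∀ j ≤ r, ∀ θ : ℝ, (r : ℝ) + 1 < θ → (j : ℝ) + 1 < θ := fun j hj θ hθ => by
    have : (j : ℝ) ≤ r := Nat.cast_le.2 hj
    linarith
  refine ⟨ENNReal.sum_lt_top.2 fun ν hν => ?_, fun g hg w hw x => ?_⟩
  · have hν : ν ≤ r := Nat.lt_succ_iff.1 (Finset.mem_range.1 hν)
    exact ENNReal.mul_lt_top (ENNReal.mul_lt_top (ENNReal.natCast_lt_top _)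
      (hφθ.discAbsMoment_lt_top hφ.bounded (Nat.cast_nonneg _) (hcast _ (Nat.sub_le r ν) _ hθφ)))
      (hψθ.contAbsMoment_lt_top hψ.integrable (Nat.cast_nonneg _) (hcast ν hν _ hθψ))
  rw [← Real.enorm_eq_ofReal_abs]
  exact enorm_durr_sub_le hφ hψ hi hii (by omega)
    (fun j hj => hφθ.summable_mul_sub_pow hφ.bounded (hcast j hj.le _ hθφ))
    (fun ν hν => hψθ.integrable_pow_mul hψ.integrable (hcast ν hν.le _ hθψ)) hg
    (fun y => (hg.2 r le_rfl).1.continuous.enorm_le_eLpNorm_top y) hw x
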